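/- Let q, n ≥ 1, H ∈ ℝ^{q×n}, h ∈ ℝ^q with h_j > 0 for every j, and define V(e) := max_{1 ≤ j ≤ q} (H·e)_j / h_j. Let M ∈ ℝ^{n×n}, λ ∈ ℝ, and suppose there exists an entrywise nonnegative P ∈ ℝ^{q×q} with P·H = H·M and P·h ≤ λ·h componentwise. Then for every e ∈ ℝⁿ with V(e) ≥ 0, one has V(M·e) ≤ λ·V(e). -/

import Mathlib

/-!
Since `P ≥ 0` acts monotonically, the componentwise bound `H·e ≤ V(e)·h` transports through the
intertwining relation `P·H = H·M` to `H·(M·e) = P·(H·e) ≤ V(e)·P·h ≤ λ·V(e)·h`, and the sign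
condition `V(e) ≥ 0` is exactly what lets `V(e)` multiply the inequality `P·h ≤ λ·h`.
-/

/-- The gauge `V(e) = max_j (H·e)_j / h_j` of the polyhedron `P(H,h)`. -/
noncomputable def polyGauge {q n : ℕ} (hq : 0 < q)
    (H : Matrix (Fin q) (Fin n) ℝ) (h : Fin q → ℝ) (e : Fin n → ℝ) : ℝ :=
  Finset.univ.sup' ⟨⟨0, hq⟩, Finset.mem_univ _⟩ fun j => H.mulVec e j / h j

namespace Matrix

variable {l m R : Type*} [Fintype m]

lemma mulVec_le_mulVec_of_nonneg [Semiring R] [PartialOrder R] [IsOrderedRing R]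
    {P : Matrix l m R} (hP : ∀ i j, 0 ≤ P i j) {x y : m → R} (hxy : x ≤ y) :
    P *ᵥ x ≤ P *ᵥ y :=
  fun i => dotProduct_le_dotProduct_of_nonneg_left hxy (hP i)

lemma mulVec_mulVec_eq_of_mul_eq [Fintype l] [CommSemiring R]
    {P : Matrix l l R} {H : Matrix l m R} {M : Matrix m m R}
    (hPH : P * H = H * M) (e : m → R) :
    H *ᵥ (M *ᵥ e) = P *ᵥ (H *ᵥ e) := by
  rw [mulVec_mulVec, ← hPH, ← mulVec_mulVec]

end Matrix

open Matrix

lemma polyGauge_le_iff {q n : ℕ} (hq : 0 < q) {H : Matrix (Fin q) (Fin n) ℝ} {h : Fin q → ℝ}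
    (hh : ∀ j, 0 < h j) {e : Fin n → ℝ} {c : ℝ} :
    polyGauge hq H h e ≤ c ↔ H *ᵥ e ≤ c • h := by
  refine (Finset.sup'_le_iff _ _).trans ?_
  simp only [Finset.mem_univ, true_implies, Pi.le_def, Pi.smul_apply, smul_eq_mul]
  exact forall_congr' fun j => div_le_iff₀ (hh j)

theorem stmt_5_general (q n : ℕ) (hq : 1 ≤ q)
    (H : Matrix (Fin q) (Fin n) ℝ) (h : Fin q → ℝ) (hh : ∀ j, 0 < h j)
    (M : Matrix (Fin n) (Fin n) ℝ) (lam : ℝ)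
    (P : Matrix (Fin q) (Fin q) ℝ)
    (hP : ∀ i j, 0 ≤ P i j)
    (hPH : P * H = H * M)
    (hPh : ∀ j, P.mulVec h j ≤ lam * h j) :
    ∀ e : Fin n → ℝ, 0 ≤ polyGauge hq H h e →
      polyGauge hq H h (M.mulVec e) ≤ lam * polyGauge hq H h e := by
  intro e hV
  set V := polyGauge hq H h e
  rw [polyGauge_le_iff hq hh]
  calc H *ᵥ (M *ᵥ e) = P *ᵥ (H *ᵥ e) := mulVec_mulVec_eq_of_mul_eq hPH e
    _ ≤ P *ᵥ (V • h) := mulVec_le_mulVec_of_nonneg hP ((polyGauge_le_iff hq hh).mp le_rfl)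
    _ = V • P *ᵥ h := mulVec_smul P V h
    _ ≤ V • lam • h := smul_le_smul_of_nonneg_left hPh hV
    _ = (lam * V) • h := by rw [smul_smul, mul_comm]

/-- one-step Lyapunov decrease from the dual certificate:
if `P ≥ 0`, `P·H = H·M` and `P·h ≤ λ·h`, then `V(M·e) ≤ λ·V(e)` whenever
`V(e) ≥ 0`. -/
theorem stmt_5 (q n : ℕ) (hq : 1 ≤ q) (hn : 1 ≤ n)
    (H : Matrix (Fin q) (Fin n) ℝ) (h : Fin q → ℝ) (hh : ∀ j, 0 < h j)
    (M : Matrix (Fin n) (Fin n) ℝ) (lam : ℝ)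
    (P : Matrix (Fin q) (Fin q) ℝ)
    (hP : ∀ i j, 0 ≤ P i j)
    (hPH : P * H = H * M)
    (hPh : ∀ j, P.mulVec h j ≤ lam * h j) :
    ∀ e : Fin n → ℝ, 0 ≤ polyGauge hq H h e →
      polyGauge hq H h (M.mulVec e) ≤ lam * polyGauge hq H h e :=
  stmt_5_general q n hq H h hh M lam P hP hPH hPh
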